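/- arXiv:2308.05706 — 3 statements merged into one kernel-verified Lean document; each statement's English description precedes it below -/
import Mathlib

section
/- Let k be a field, H a Hopf algebra over k, and B a right coideal subalgebra of H such that B = {h ∈ H : h ⊗ 1 − 1 ⊗ h ∈ J_B}. Then B = H^{co H/(HB⁺)}, i.e. B equals the set of x ∈ H with Σ π(x₍₁₎) ⊗ x₍₂₎ = π(1) ⊗ x in (H/HB⁺) ⊗ H, where π : H → H/HB⁺ is the quotient map. -/
/-!
For `b ∈ B` the coideal property puts `Δb` in `B ⊗ H`, and `π(b) = ε(b) π(1)` because
`b - ε(b) 1 ∈ B⁺`; hence every element of `B` is coinvariant.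

Conversely, the inverse `u ⊗ v ↦ Σ u₁ ⊗ S(u₂) v` of the Galois map sends `Δx - 1 ⊗ x` to
`x ⊗ 1 - 1 ⊗ x`, and it sends `HB⁺ ⊗ H` into `J_B`: for `b ∈ B⁺`, modulo `J_B`,
`Σ a₁b₁ ⊗ S(b₂)S(a₂)h ≡ Σ a₁ ⊗ b₁S(b₂)S(a₂)h = ε(b) Σ a₁ ⊗ S(a₂)h = 0`, since `b₁ ∈ B`.
If `x` is coinvariant, right exactness of `- ⊗ H` puts `Δx - 1 ⊗ x` in `HB⁺ ⊗ H`, so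
`x ⊗ 1 - 1 ⊗ x ∈ J_B`, and the equalizer condition gives `x ∈ B`.
-/

open TensorProduct

noncomputable section

namespace HopfGalois

variable (k : Type*) (H : Type*) [Field k] [Ring H] [HopfAlgebra k H]

/-- The linear map `H ⊗ H → H`, `x ⊗ y ↦ ε(x) • y`. -/
def epsTensorId : H ⊗[k] H →ₗ[k] H :=
  (TensorProduct.lid k H).toLinearMap ∘ₗ
    TensorProduct.map (Coalgebra.counit : H →ₗ[k] k) (LinearMap.id : H →ₗ[k] H)

/-- The linear map `H ⊗ H → H`, `x ⊗ y ↦ ε(y) • x`. -/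
def idTensorEps : H ⊗[k] H →ₗ[k] H :=
  (TensorProduct.rid k H).toLinearMap ∘ₗ
    TensorProduct.map (LinearMap.id : H →ₗ[k] H) (Coalgebra.counit : H →ₗ[k] k)

/-- `x ⊗ y ↦ Σ x₍₁₎ ⊗ π_I(x₍₂₎) ⊗ y`. -/
def cotensorL (I : Submodule k H) : H ⊗[k] H →ₗ[k] H ⊗[k] ((H ⧸ I) ⊗[k] H) :=
  TensorProduct.map (LinearMap.id : H →ₗ[k] H)
      (TensorProduct.map I.mkQ (LinearMap.id : H →ₗ[k] H))
    ∘ₗ (TensorProduct.assoc k H H H).toLinearMap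
    ∘ₗ TensorProduct.map (Coalgebra.comul : H →ₗ[k] H ⊗[k] H) (LinearMap.id : H →ₗ[k] H)

/-- `x ⊗ y ↦ Σ x ⊗ π_I(y₍₁₎) ⊗ y₍₂₎`. -/
def cotensorR (I : Submodule k H) : H ⊗[k] H →ₗ[k] H ⊗[k] ((H ⧸ I) ⊗[k] H) :=
  TensorProduct.map (LinearMap.id : H →ₗ[k] H)
    (TensorProduct.map I.mkQ (LinearMap.id : H →ₗ[k] H)
      ∘ₗ (Coalgebra.comul : H →ₗ[k] H ⊗[k] H))

/-- The cotensor product `H □^{H/I} H` as a subspace of `H ⊗ H`. -/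
def cotensor (I : Submodule k H) : Submodule k (H ⊗[k] H) :=
  LinearMap.ker (cotensorL k H I - cotensorR k H I)

/-- The subspace of coinvariants `H^{co H/I}`:
`{x ∈ H : Σ π_I(x₍₁₎) ⊗ x₍₂₎ = π_I(1) ⊗ x}`. -/
def coinv (I : Submodule k H) : Submodule k H :=
  LinearMap.ker
    ((TensorProduct.map I.mkQ (LinearMap.id : H →ₗ[k] H)
        ∘ₗ (Coalgebra.comul : H →ₗ[k] H ⊗[k] H))
      - TensorProduct.mk k (H ⧸ I) H (I.mkQ 1))

/-- A left ideal coideal: a left ideal `I` with `ε(I) = 0` and `Δ(I) ⊆ I ⊗ H + H ⊗ I`. -/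
structure IsLeftIdealCoideal (I : Submodule k H) : Prop where
  mul_mem_left : ∀ (h x : H), x ∈ I → h * x ∈ I
  counit_zero : ∀ x ∈ I, (Coalgebra.counit : H →ₗ[k] k) x = 0
  comul_mem : ∀ x ∈ I, (Coalgebra.comul : H →ₗ[k] H ⊗[k] H) x ∈
    LinearMap.range (TensorProduct.map I.subtype (LinearMap.id : H →ₗ[k] H)) ⊔
      LinearMap.range (TensorProduct.map (LinearMap.id : H →ₗ[k] H) I.subtype)

/-- A right coideal subalgebra: a subalgebra `B` with `Δ(B) ⊆ B ⊗ H`. -/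
def IsRightCoidealSubalgebra (B : Subalgebra k H) : Prop :=
  ∀ b ∈ B, (Coalgebra.comul : H →ₗ[k] H ⊗[k] H) b ∈
    LinearMap.range
      (TensorProduct.map (Subalgebra.toSubmodule B).subtype (LinearMap.id : H →ₗ[k] H))

/-- The left ideal of `H` generated by a subset `S`, as a `k`-subspace of `H`. -/
def leftIdealGen (S : Set H) : Submodule k H :=
  Submodule.span k {z : H | ∃ h : H, ∃ b ∈ S, z = h * b}

/-- `S⁺ = S ∩ ker ε`. -/
def plusPart (S : Set H) : Set H :=
  {b ∈ S | (Coalgebra.counit : H →ₗ[k] k) b = 0}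

/-- `H·S⁺`, the left ideal of `H` generated by `S ∩ ker ε`. -/
def HSplus (S : Set H) : Submodule k H :=
  leftIdealGen k H (plusPart k H S)

/-- The subspace `J_B ⊆ H ⊗ H` spanned by `{xb ⊗ y − x ⊗ by : x, y ∈ H, b ∈ B}`,
so that `H ⊗_B H = (H ⊗ H)/J_B`. -/
def JB (S : Set H) : Submodule k (H ⊗[k] H) :=
  Submodule.span k
    {z : H ⊗[k] H | ∃ x y : H, ∃ b ∈ S, z = (x * b) ⊗ₜ[k] y - x ⊗ₜ[k] (b * y)}

/-- `B` is the equalizer of the two canonical maps `H → H ⊗_B H`. -/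
def equalizerCond (S : Set H) : Prop :=
  {h : H | h ⊗ₜ[k] (1 : H) - (1 : H) ⊗ₜ[k] h ∈ JB k H S} = S

/-- `H/I` is the coequalizer of `ε ⊗ id` and `id ⊗ ε` restricted to `H □^{H/I} H`, i.e.
`I` is the subspace spanned by `{Σ ε(xᵢ)yᵢ − Σ xᵢε(yᵢ) : Σ xᵢ ⊗ yᵢ ∈ H □^{H/I} H}`. -/
def coequalizerCond (I : Submodule k H) : Prop :=
  I = Submodule.map (epsTensorId k H - idTensorEps k H) (cotensor k H I)

section GaloisInv

open Coalgebra HopfAlgebra LinearMap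

variable {R A : Type*} [CommSemiring R] [Semiring A] [HopfAlgebra R A]

/-- `u ⊗ v ↦ Σ u₁ ⊗ S(u₂) v`, the inverse of the Galois map `x ⊗ y ↦ Δ(x) (1 ⊗ y)`. -/
def galoisInv : A ⊗[R] A →ₗ[R] A ⊗[R] A :=
  lTensor A (mul' R A ∘ₗ rTensor A (antipode R)) ∘ₗ
    (TensorProduct.assoc R A A A).toLinearMap ∘ₗ rTensor A comul

lemma galoisInv_tmul {ι : Type*} {u : A} (r : Repr R u ι) (v : A) :
    galoisInv (u ⊗ₜ[R] v) = ∑ i ∈ r.index, r.left i ⊗ₜ[R] (antipode R (r.right i) * v) := by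
  simp [galoisInv, ← r.eq, sum_tmul, map_sum]

lemma galoisInv_comul (x : A) : galoisInv (comul x) = x ⊗ₜ[R] (1 : A) :=
  calc galoisInv (comul x)
      = lTensor A (mul' R A ∘ₗ rTensor A (antipode R) ∘ₗ comul) (comul x) := by
        simp only [galoisInv, comp_apply, LinearEquiv.coe_coe, coassoc_apply, lTensor_comp_apply]
    _ = lTensor A (Algebra.linearMap R A) (lTensor A counit (comul x)) := by
        rw [mul_antipode_rTensor_comul, lTensor_comp_apply]
    _ = x ⊗ₜ[R] (1 : A) := by simp

lemma galoisInv_one_tmul (x : A) : galoisInv ((1 : A) ⊗ₜ[R] x) = (1 : A) ⊗ₜ[R] x := by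
  simp [galoisInv, Algebra.TensorProduct.one_def]

end GaloisInv

section CoidealSubalgebra

open Coalgebra HopfAlgebra LinearMap

variable {k H}

lemma IsRightCoidealSubalgebra.exists_repr_left_mem {B : Subalgebra k H}
    (hB : IsRightCoidealSubalgebra k H B) {b : H} (hb : b ∈ B) :
    ∃ r : Repr k b (B × H), ∀ i, r.left i ∈ B := by
  obtain ⟨s, hs⟩ := hB b hb
  obtain ⟨T, rfl⟩ := TensorProduct.exists_finset (R := k) s
  exact ⟨⟨T, fun i => i.1, Prod.snd, by rw [← hs]; simp [map_sum]; rfl⟩, fun i => i.1.2⟩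

lemma mkQ_HSplus_eq_counit_smul (B : Subalgebra k H) {b : H} (hb : b ∈ B) :
    (HSplus k H B).mkQ b = counit (R := k) b • (HSplus k H B).mkQ 1 := by
  rw [← map_smul, Submodule.mkQ_apply, Submodule.mkQ_apply, Submodule.Quotient.eq]
  refine Submodule.subset_span ⟨1, b - counit (R := k) b • 1, ⟨?_, ?_⟩, (one_mul _).symm⟩
  · exact B.sub_mem hb (B.smul_mem B.one_mem _)
  · simp

lemma le_coinv_HSplus {B : Subalgebra k H} (hB : IsRightCoidealSubalgebra k H B) :
    Subalgebra.toSubmodule B ≤ coinv k H (HSplus k H B) := by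
  intro x hx
  obtain ⟨r, hr⟩ := hB.exists_repr_left_mem hx
  rw [coinv, mem_ker, LinearMap.sub_apply, sub_eq_zero, comp_apply, ← r.eq, map_sum]
  simp only [map_tmul, mkQ_HSplus_eq_counit_smul B (hr _), id_apply, smul_tmul, ← tmul_sum,
    sum_counit_smul, mk_apply]

lemma mkQ_JB_mul_tmul {S : Set H} {b : H} (hb : b ∈ S) (x y : H) :
    (JB k H S).mkQ ((x * b) ⊗ₜ[k] y) = (JB k H S).mkQ (x ⊗ₜ[k] (b * y)) :=
  (Submodule.Quotient.eq _).2 (Submodule.subset_span ⟨x, y, b, hb, rfl⟩)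

lemma galoisInv_mul_tmul_mem_JB {B : Subalgebra k H} (hB : IsRightCoidealSubalgebra k H B)
    {b : H} (hb : b ∈ plusPart k H B) (a h : H) :
    galoisInv ((a * b) ⊗ₜ[k] h) ∈ JB k H B := by
  obtain ⟨rb, hrb⟩ := hB.exists_repr_left_mem hb.1
  set ra := ℛ k a
  rw [← Submodule.Quotient.mk_eq_zero, ← Submodule.mkQ_apply, galoisInv_tmul (ra.mul rb), map_sum,
    Repr.mul_index, Finset.sum_product]
  calc ∑ i ∈ ra.index, ∑ j ∈ rb.index, (JB k H B).mkQ ((ra.mul rb).left (i, j) ⊗ₜ[k]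
          (antipode k ((ra.mul rb).right (i, j)) * h))
      = ∑ i ∈ ra.index, (JB k H B).mkQ (ra.left i ⊗ₜ[k]
          ((∑ j ∈ rb.index, rb.left j * antipode k (rb.right j)) *
            (antipode k (ra.right i) * h))) := by
        refine Finset.sum_congr rfl fun i _ => ?_
        rw [Finset.sum_mul, tmul_sum, map_sum]
        refine Finset.sum_congr rfl fun j _ => ?_
        rw [Repr.mul_left, Repr.mul_right, mkQ_JB_mul_tmul (hrb j), antipode_mul_antidistrib,
          mul_assoc, mul_assoc]
    _ = 0 := by simp [sum_mul_antipode_eq_smul, hb.2]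

lemma galoisInv_tmul_mem_JB {B : Subalgebra k H} (hB : IsRightCoidealSubalgebra k H B)
    {c : H} (hc : c ∈ HSplus k H B) (h : H) : galoisInv (c ⊗ₜ[k] h) ∈ JB k H B := by
  induction hc using Submodule.span_induction with
  | mem c hc =>
    obtain ⟨a, b, hb, rfl⟩ := hc
    exact galoisInv_mul_tmul_mem_JB hB hb a h
  | zero => simp
  | add c d _ _ hc hd => rw [add_tmul, map_add]; exact add_mem hc hd
  | smul r c _ hc => rw [← smul_tmul', map_smul]; exact Submodule.smul_mem _ r hc

lemma tmul_one_sub_one_tmul_mem_JB {B : Subalgebra k H} (hB : IsRightCoidealSubalgebra k H B)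
    {x : H} (hx : x ∈ coinv k H (HSplus k H B)) :
    x ⊗ₜ[k] (1 : H) - (1 : H) ⊗ₜ[k] x ∈ JB k H B := by
  have hker : comul x - (1 : H) ⊗ₜ[k] x ∈ ker (rTensor H (HSplus k H B).mkQ) := by
    simpa [coinv, sub_eq_zero, rTensor] using hx
  obtain ⟨t, ht⟩ := rTensor_mkQ H (HSplus k H B) ▸ hker
  rw [← galoisInv_comul, ← galoisInv_one_tmul (R := k), ← map_sub, ← ht]
  clear ht
  induction t using TensorProduct.induction_on with
  | zero => simp
  | tmul c h => exact galoisInv_tmul_mem_JB hB c.2 h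
  | add t₁ t₂ h₁ h₂ => rw [map_add, map_add]; exact add_mem h₁ h₂

end CoidealSubalgebra

/-- If `B` is a right coideal subalgebra satisfying the equalizer
condition, then `B = H^{co H/(HB⁺)}`. -/
theorem coinv_HSplus_eq (k H : Type*) [Field k] [Ring H] [HopfAlgebra k H]
    (B : Subalgebra k H) (hB : IsRightCoidealSubalgebra k H B)
    (heq : equalizerCond k H (B : Set H)) :
    (B : Set H) = ((coinv k H (HSplus k H (B : Set H)) : Submodule k H) : Set H) := by
  ext x
  refine ⟨fun hx => le_coinv_HSplus hB hx, fun hx => ?_⟩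
  rw [← heq]
  exact tmul_one_sub_one_tmul_mem_JB hB hx

end HopfGalois
end
end

section
/- Let k be a field, H a Hopf algebra over k, and I a left ideal coideal of H such that I equals the subspace of H spanned by {Σᵢ ε(xᵢ)yᵢ − Σᵢ xᵢε(yᵢ) : Σᵢ xᵢ ⊗ yᵢ ∈ H □^{H/I} H}. Then I = H·(H^{co H/I})⁺, the left ideal of H generated by {b ∈ H^{co H/I} : ε(b) = 0}. -/
open TensorProduct

noncomputable section

namespace HopfGalois

variable (k : Type*) (H : Type*) [Field k] [Ring H] [HopfAlgebra k H]

/-!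
For a representation `ρ` of `H` on `M`, the map `a ⊗ m ↦ Σ a₍₁₎ ⊗ ρ(a₍₂₎) m` of `H ⊗ M` is
bijective, its inverse coming from the convolution inverse `ρ ∘ S` of `ρ`. For the left regular
representation this is `Φ(a ⊗ b) = Σ a₍₁₎ ⊗ a₍₂₎ b`, and `(ε ⊗ id - id ⊗ ε) ∘ Φ = μ - id ⊗ ε`;
write an element of `H □^{H/I} H` as `Φ w`. With `T` the map for the diagonal action on `H ⊗ H`,
the two sides of the cotensor condition on `Φ w` are `(id ⊗ π ⊗ id) T` applied to
`(id ⊗ 1 ⊗ id) w` and to `(id ⊗ Δ) w`. As `I` is a left ideal, `T⁻¹` preserves `H ⊗ I ⊗ H`, so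
the two sides agree already before applying `T`, which says `w ∈ H ⊗ H^{co H/I}` (tensoring is
exact over the field `k`). For such `w = Σ h ⊗ b`, `(μ - id ⊗ ε) w = Σ h (b - ε(b) 1)` lies in
`H·(H^{co H/I})⁺`. Conversely `π(b) = ε(b) π(1)` for coinvariant `b`, so `(H^{co H/I})⁺ ⊆ I`.
-/

open Coalgebra WithConv

section Twist

variable {R A M : Type*} [CommSemiring R] [Semiring A] [AddCommMonoid M] [Module R M]

section Bialgebra

variable [Bialgebra R A]

lemma sum_counit_right_smul {a : A} {ι : Type*} (r : Repr R a ι) :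
    ∑ i ∈ r.index, counit (R := R) (r.right i) • r.left i = a := by
  simpa only [map_sum, rid_tmul, one_smul] using
    congr(TensorProduct.rid R A $(sum_tmul_counit_eq r))

/-- `a ⊗ m ↦ Σ a₍₁₎ ⊗ f(a₍₂₎) m`. -/
def twist (f : A →ₗ[R] Module.End R M) : A ⊗[R] M →ₗ[R] A ⊗[R] M :=
  (TensorProduct.lift f).lTensor A ∘ₗ (TensorProduct.assoc R A A M).toLinearMap ∘ₗ
    (comul (R := R) (A := A)).rTensor M

lemma twist_tmul (f : A →ₗ[R] Module.End R M) {a : A} {ι : Type*} (r : Repr R a ι) (m : M) :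
    twist f (a ⊗ₜ m) = ∑ i ∈ r.index, r.left i ⊗ₜ f (r.right i) m := by
  simp [twist, ← r.eq, sum_tmul]

lemma twist_comp_twist (f g : A →ₗ[R] Module.End R M) :
    twist f ∘ₗ twist g = twist (toConv f * toConv g).ofConv := by
  ext a m
  set r := ℛ R a
  have key := sum_tmul_tmul_eq r (fun i => ℛ R (r.left i)) (fun i => ℛ R (r.right i))
  apply_fun (LinearMap.applyₗ m ∘ₗ LinearMap.mul' R (Module.End R M) ∘ₗ map f g).lTensor A
    at key
  simpa [twist_tmul _ r, twist_tmul _ (ℛ R (r.left _)), (ℛ R (r.right _)).convMul_apply,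
    tmul_sum] using key

lemma twist_one : twist (1 : WithConv (A →ₗ[R] Module.End R M)).ofConv = LinearMap.id := by
  refine TensorProduct.ext' fun a m => ?_
  have := congr((LinearMap.toSpanSingleton R M m).lTensor A $(sum_tmul_counit_eq (ℛ R a)))
  rw [twist_tmul _ (ℛ R a)]
  simpa only [map_sum, LinearMap.lTensor_tmul, LinearMap.toSpanSingleton_apply, one_smul,
    LinearMap.id_apply, LinearMap.convOne_apply, Module.algebraMap_end_apply] using this

lemma lTensor_comp_twist {N : Type*} [AddCommMonoid N] [Module R N]
    (f : A →ₗ[R] Module.End R M) (f' : A →ₗ[R] Module.End R N) (g : M →ₗ[R] N)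
    (hg : ∀ h m, g (f h m) = f' h (g m)) :
    g.lTensor A ∘ₗ twist f = twist f' ∘ₗ g.lTensor A := by
  refine TensorProduct.ext' fun a m => ?_
  simp [twist_tmul _ (ℛ R a), hg]

lemma twist_mem_range_lTensor {N : Type*} [AddCommMonoid N] [Module R N]
    (f : A →ₗ[R] Module.End R M) (j : N →ₗ[R] M)
    (hj : ∀ h, ∀ m ∈ LinearMap.range j, f h m ∈ LinearMap.range j)
    {x : A ⊗[R] M} (hx : x ∈ LinearMap.range (j.lTensor A)) :
    twist f x ∈ LinearMap.range (j.lTensor A) := by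
  obtain ⟨y, rfl⟩ := hx
  induction y using TensorProduct.induction_on with
  | zero => simp
  | tmul a n =>
    rw [LinearMap.lTensor_tmul, twist_tmul _ (ℛ R a)]
    refine Submodule.sum_mem _ fun i _ => ?_
    obtain ⟨n', hn'⟩ := hj ((ℛ R a).right i) (j n) ⟨n, rfl⟩
    exact ⟨(ℛ R a).left i ⊗ₜ n', by rw [LinearMap.lTensor_tmul, hn']⟩
  | add y z hy hz => simpa only [map_add] using Submodule.add_mem _ hy hz

end Bialgebra

variable [HopfAlgebra R A]

lemma convMul_comp_antipode {B : Type*} [Semiring B] [Algebra R B] (ρ : A →ₐ[R] B) :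
    toConv ρ.toLinearMap * toConv (ρ.toLinearMap ∘ₗ HopfAlgebra.antipode R) = 1 := by
  ext a
  simp [(ℛ R a).convMul_apply, ← map_mul, ← map_sum,
    HopfAlgebra.sum_mul_antipode_eq_algebraMap_counit]

lemma comp_antipode_convMul {B : Type*} [Semiring B] [Algebra R B] (ρ : A →ₐ[R] B) :
    toConv (ρ.toLinearMap ∘ₗ HopfAlgebra.antipode R) * toConv ρ.toLinearMap = 1 := by
  ext a
  simp [(ℛ R a).convMul_apply, ← map_mul, ← map_sum,
    HopfAlgebra.sum_antipode_mul_eq_algebraMap_counit]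

def twistEquiv (ρ : A →ₐ[R] Module.End R M) : (A ⊗[R] M) ≃ₗ[R] (A ⊗[R] M) :=
  .ofLinearMap (twist ρ.toLinearMap) (twist (ρ.toLinearMap ∘ₗ HopfAlgebra.antipode R))
    (by rw [twist_comp_twist, convMul_comp_antipode, twist_one])
    (by rw [twist_comp_twist, comp_antipode_convMul, twist_one])

lemma coe_twistEquiv (ρ : A →ₐ[R] Module.End R M) :
    ⇑(twistEquiv ρ) = twist ρ.toLinearMap := rfl

lemma coe_twistEquiv_symm (ρ : A →ₐ[R] Module.End R M) :
    ⇑(twistEquiv ρ).symm = twist (ρ.toLinearMap ∘ₗ HopfAlgebra.antipode R) := rfl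

end Twist

section CoequalizerCond

variable {k H}

def diagAction : H →ₐ[k] Module.End k (H ⊗[k] H) :=
  (Algebra.lmul k (H ⊗[k] H)).comp (Bialgebra.comulAlgHom k H)

lemma epsTensorId_comp_twist :
    epsTensorId k H ∘ₗ twist (Algebra.lmul k H).toLinearMap = LinearMap.mul' k H := by
  refine TensorProduct.ext' fun a b => ?_
  rw [LinearMap.comp_apply, twist_tmul _ (ℛ k a)]
  simp only [epsTensorId, map_sum, LinearMap.comp_apply, map_tmul, LinearEquiv.coe_coe,
    lid_tmul, LinearMap.id_apply, AlgHom.toLinearMap_apply, Algebra.coe_lmul_eq_mul,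
    LinearMap.mul_apply', LinearMap.mul'_apply, ← smul_mul_assoc, ← Finset.sum_mul,
    sum_counit_smul]

lemma idTensorEps_comp_twist :
    idTensorEps k H ∘ₗ twist (Algebra.lmul k H).toLinearMap = idTensorEps k H := by
  refine TensorProduct.ext' fun a b => ?_
  rw [LinearMap.comp_apply, twist_tmul _ (ℛ k a)]
  simp only [idTensorEps, map_sum, LinearMap.comp_apply, map_tmul, LinearEquiv.coe_coe,
    rid_tmul, LinearMap.id_apply, AlgHom.toLinearMap_apply, Algebra.coe_lmul_eq_mul,
    LinearMap.mul_apply', Bialgebra.counit_mul, mul_comm _ (counit b), mul_smul,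
    ← Finset.smul_sum, sum_counit_right_smul]

lemma cotensorR_comp_twist (I : Submodule k H) :
    cotensorR k H I ∘ₗ twist (Algebra.lmul k H).toLinearMap =
      (I.mkQ.rTensor H).lTensor H ∘ₗ twist diagAction.toLinearMap ∘ₗ
        (comul (R := k) (A := H)).lTensor H := by
  have hR : cotensorR k H I =
      (I.mkQ.rTensor H).lTensor H ∘ₗ (comul (R := k) (A := H)).lTensor H := by
    rw [← LinearMap.lTensor_comp]; rfl
  rw [hR, LinearMap.comp_assoc,
    lTensor_comp_twist _ diagAction.toLinearMap _ fun h m => by simp [diagAction]]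

lemma cotensorL_comp_twist (I : Submodule k H) :
    cotensorL k H I ∘ₗ twist (Algebra.lmul k H).toLinearMap =
      (I.mkQ.rTensor H).lTensor H ∘ₗ twist diagAction.toLinearMap ∘ₗ
        (TensorProduct.mk k H H 1).lTensor H := by
  refine TensorProduct.ext' fun a b => ?_
  set r := ℛ k a
  have key := sum_tmul_tmul_eq r (fun i => ℛ k (r.left i)) (fun i => ℛ k (r.right i))
  apply_fun (TensorProduct.map I.mkQ (LinearMap.mulRight k b)).lTensor H at key
  simpa [cotensorL, diagAction, twist_tmul _ r, twist_tmul _ (ℛ k (r.left _)),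
    ← (ℛ k (r.right _)).eq, ← (ℛ k (r.left _)).eq, tmul_sum, sum_tmul, Finset.sum_mul]
    using key

lemma mul_mem_range_rTensor_subtype {I : Submodule k H} (hI : ∀ h x, x ∈ I → h * x ∈ I)
    (v : H ⊗[k] H) {m : H ⊗[k] H} (hm : m ∈ LinearMap.range (I.subtype.rTensor H)) :
    v * m ∈ LinearMap.range (I.subtype.rTensor H) := by
  obtain ⟨u, rfl⟩ := hm
  induction u using TensorProduct.induction_on with
  | zero => simp
  | tmul x y =>
    induction v using TensorProduct.induction_on with
    | zero => simp
    | tmul a b => exact ⟨⟨a * x, hI a x x.2⟩ ⊗ₜ (b * y), by simp⟩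
    | add v v' hv hv' => rw [add_mul]; exact add_mem hv hv'
  | add u u' hu hu' => rw [map_add, mul_add]; exact add_mem hu hu'

lemma lTensor_rTensor_mkQ_eq_zero_of_twist {I : Submodule k H}
    (hI : ∀ h x, x ∈ I → h * x ∈ I) {x : H ⊗[k] (H ⊗[k] H)}
    (hx : (I.mkQ.rTensor H).lTensor H (twist diagAction.toLinearMap x) = 0) :
    (I.mkQ.rTensor H).lTensor H x = 0 := by
  have hexact :=
    Module.Flat.lTensor_exact H (Module.Flat.rTensor_exact H (LinearMap.exact_subtype_mkQ I))
  rw [← (twistEquiv diagAction).symm_apply_apply x, coe_twistEquiv_symm]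
  refine (hexact _).mpr <| twist_mem_range_lTensor (A := H) _ (I.subtype.rTensor H)
    (fun h _ hm => ?_) ((hexact _).mp hx)
  exact mul_mem_range_rTensor_subtype hI (comul (HopfAlgebra.antipode k h)) hm

lemma one_mem_coinv (I : Submodule k H) : (1 : H) ∈ coinv k H I := by
  simp [coinv, Algebra.TensorProduct.one_def]

lemma mkQ_eq_counit_smul_of_mem_coinv {I : Submodule k H} {b : H} (hb : b ∈ coinv k H I) :
    I.mkQ b = counit (R := k) b • I.mkQ 1 := by
  have h := congr(TensorProduct.rid k (H ⧸ I) ((counit (R := k) (A := H)).lTensor (H ⧸ I)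
    $(sub_eq_zero.mp (LinearMap.mem_ker.mp hb))))
  simp only [LinearMap.comp_apply, ← (ℛ k b).eq, map_sum, map_tmul, LinearMap.lTensor_tmul,
    LinearMap.id_apply, mk_apply, rid_tmul] at h
  rw [← h]
  nth_rw 1 [← sum_counit_right_smul (ℛ k b)]
  simp only [map_sum, map_smul]

lemma mem_range_lTensor_coinv_of_twist_mem_cotensor {I : Submodule k H}
    (hI : ∀ h x, x ∈ I → h * x ∈ I) {w : H ⊗[k] H}
    (hw : twist (Algebra.lmul k H).toLinearMap w ∈ cotensor k H I) :
    w ∈ LinearMap.range ((coinv k H I).subtype.lTensor H) := by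
  have hLR := sub_eq_zero.mp (LinearMap.mem_ker.mp hw)
  rw [← LinearMap.comp_apply, ← LinearMap.comp_apply (cotensorR k H I),
    cotensorL_comp_twist, cotensorR_comp_twist] at hLR
  have hP := lTensor_rTensor_mkQ_eq_zero_of_twist hI
    (x := (comul (R := k) (A := H)).lTensor H w - (TensorProduct.mk k H H 1).lTensor H w)
    (by simpa [map_sub, sub_eq_zero] using hLR.symm)
  refine (Module.Flat.lTensor_exact H (LinearMap.exact_subtype_ker_map _) w).mp ?_
  rw [← hP, map_sub, LinearMap.lTensor_sub, LinearMap.sub_apply, ← LinearMap.lTensor_comp_apply,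
    ← LinearMap.lTensor_comp_apply]
  congr 3

lemma mul'_sub_idTensorEps_mem_HSplus (I : Submodule k H) {w : H ⊗[k] H}
    (hw : w ∈ LinearMap.range ((coinv k H I).subtype.lTensor H)) :
    (LinearMap.mul' k H - idTensorEps k H) w ∈ HSplus k H (coinv k H I : Set H) := by
  obtain ⟨u, rfl⟩ := hw
  induction u using TensorProduct.induction_on with
  | zero => simp
  | tmul h b =>
    refine Submodule.subset_span ⟨h, b - counit (R := k) (b : H) • 1, ⟨?_, ?_⟩, ?_⟩
    · exact sub_mem b.2 (Submodule.smul_mem _ _ (one_mem_coinv I))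
    · simp
    · simp [idTensorEps, mul_sub]
  | add u v hu hv => simpa only [map_add] using add_mem hu hv

lemma HSplus_coinv_le {I : Submodule k H} (hI : ∀ h x, x ∈ I → h * x ∈ I) :
    HSplus k H (coinv k H I : Set H) ≤ I := by
  refine Submodule.span_le.mpr ?_
  rintro _ ⟨h, b, ⟨hb, hεb⟩, rfl⟩
  refine hI h b ?_
  rw [← Submodule.Quotient.mk_eq_zero, ← Submodule.mkQ_apply,
    mkQ_eq_counit_smul_of_mem_coinv hb, hεb, zero_smul]

lemma le_HSplus_coinv {I : Submodule k H} (hI : ∀ h x, x ∈ I → h * x ∈ I)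
    (hco : coequalizerCond k H I) : I ≤ HSplus k H (coinv k H I : Set H) := by
  intro z hz
  rw [hco] at hz
  obtain ⟨t, ht, rfl⟩ := hz
  obtain ⟨w, rfl⟩ := (twistEquiv (Algebra.lmul k H)).surjective t
  rw [coe_twistEquiv] at ht ⊢
  rw [← LinearMap.comp_apply, LinearMap.sub_comp, epsTensorId_comp_twist, idTensorEps_comp_twist]
  exact mul'_sub_idTensorEps_mem_HSplus I (mem_range_lTensor_coinv_of_twist_mem_cotensor hI ht)

end CoequalizerCond

/-- If `I` is a left ideal coideal satisfying the coequalizer condition,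
then `I = H·(H^{co H/I})⁺`. -/
theorem HSplus_coinv_eq (k H : Type*) [Field k] [Ring H] [HopfAlgebra k H]
    (I : Submodule k H) (hI : IsLeftIdealCoideal k H I) (hco : coequalizerCond k H I) :
    I = HSplus k H ((coinv k H I : Submodule k H) : Set H) :=
  le_antisymm (le_HSplus_coinv hI.mul_mem_left hco) (HSplus_coinv_le hI.mul_mem_left)

end HopfGalois
end
end

section
/- Let k be a field, H a Hopf algebra over k, and I a left ideal coideal of H. Set B := H^{co H/I} (a subalgebra of H). Then B is exactly the equalizer of the two canonical maps H → H ⊗_B H: that is, {h ∈ H : h ⊗ 1 − 1 ⊗ h ∈ J_B} = B. -/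
open TensorProduct

noncomputable section

namespace HopfGalois

variable (k : Type*) (H : Type*) [Field k] [Ring H] [HopfAlgebra k H]

/-! The Galois map `x ⊗ y ↦ Δ(x)(1 ⊗ y)` followed by `π_I ⊗ id` sends `xb ⊗ y − x ⊗ by` to
`(π_I ⊗ id)(Δ(x)(Δ(b) − 1 ⊗ b)(1 ⊗ y))`. For `b ∈ B` the middle factor lies in
`I ⊗ H = ker(π_I ⊗ id)`, which is stable under left multiplication because `I` is a left ideal,
so this map kills `J_B`. On `h ⊗ 1 − 1 ⊗ h` it gives `(π_I ⊗ id)(Δ(h) − 1 ⊗ h)`, whose vanishing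
is the coinvariance of `h`. -/

section LeftIdeal

variable {R A B : Type*} [CommRing R] [Ring A] [Ring B] [Algebra R A] [Algebra R B]

open LinearMap in
theorem rTensor_mkQ_mul_eq_zero {I : Submodule R A} (hI : ∀ a x, x ∈ I → a * x ∈ I)
    (u : A ⊗[R] B) {v : A ⊗[R] B} (hv : rTensor B I.mkQ v = 0) :
    rTensor B I.mkQ (u * v) = 0 := by
  obtain ⟨w, rfl⟩ : v ∈ range (rTensor B I.subtype) := by
    rwa [← rTensor_mkQ, mem_ker]
  clear hv
  induction w using TensorProduct.induction_on with
  | zero => simp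
  | add w₁ w₂ h₁ h₂ => rw [map_add, mul_add, map_add, h₁, h₂, add_zero]
  | tmul i c =>
    induction u using TensorProduct.induction_on with
    | zero => simp
    | add u₁ u₂ h₁ h₂ => rw [add_mul, map_add, h₁, h₂, add_zero]
    | tmul a b =>
      have : I.mkQ (a * i) = 0 := (Submodule.Quotient.mk_eq_zero I).mpr (hI a i i.2)
      simp [this]

open LinearMap in
theorem rTensor_mkQ_mul_one_tmul_eq_zero (I : Submodule R A) {v : A ⊗[R] B}
    (hv : rTensor B I.mkQ v = 0) (y : B) :
    rTensor B I.mkQ (v * ((1 : A) ⊗ₜ[R] y)) = 0 := by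
  have hcomm : rTensor B I.mkQ ∘ₗ mulRight R ((1 : A) ⊗ₜ[R] y) =
      lTensor (A ⧸ I) (mulRight R y) ∘ₗ rTensor B I.mkQ :=
    TensorProduct.ext' fun a b => by simp
  rw [← mulRight_apply (R := R), ← comp_apply, hcomm, comp_apply, hv, map_zero]

end LeftIdeal

section GaloisMap

variable {R H : Type*} [CommRing R] [Ring H] [Bialgebra R H]

def galoisMap : H ⊗[R] H →ₗ[R] H ⊗[R] H :=
  LinearMap.mul' R (H ⊗[R] H) ∘ₗ
    TensorProduct.map Coalgebra.comul (Algebra.TensorProduct.includeRight : H →ₐ[R] H ⊗[R] H)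

@[simp]
theorem galoisMap_tmul (x y : H) :
    galoisMap (x ⊗ₜ[R] y) = Coalgebra.comul (R := R) x * ((1 : H) ⊗ₜ[R] y) := by
  simp [galoisMap]

theorem galoisMap_tmul_one_sub_one_tmul (h : H) :
    galoisMap (h ⊗ₜ[R] (1 : H) - (1 : H) ⊗ₜ[R] h) = Coalgebra.comul h - (1 : H) ⊗ₜ[R] h := by
  simp [← Algebra.TensorProduct.one_def]

theorem galoisMap_mul_tmul_sub_tmul_mul (x y b : H) :
    galoisMap ((x * b) ⊗ₜ[R] y - x ⊗ₜ[R] (b * y)) =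
      Coalgebra.comul (R := R) x *
        ((Coalgebra.comul b - (1 : H) ⊗ₜ[R] b) * ((1 : H) ⊗ₜ[R] y)) := by
  simp [Bialgebra.comul_mul, mul_sub, sub_mul, mul_assoc]

end GaloisMap

section Coinvariants

variable {k H : Type*} [Field k] [Ring H] [HopfAlgebra k H]

theorem mem_coinv_iff (I : Submodule k H) (h : H) :
    h ∈ coinv k H I ↔
      LinearMap.rTensor H I.mkQ (Coalgebra.comul h - (1 : H) ⊗ₜ[k] h) = 0 := by
  simp [coinv, LinearMap.rTensor, sub_eq_zero]

theorem JB_coinv_le_ker (I : Submodule k H) (hI : ∀ a x, x ∈ I → a * x ∈ I) :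
    JB k H (coinv k H I) ≤ LinearMap.ker (LinearMap.rTensor H I.mkQ ∘ₗ galoisMap) := by
  refine Submodule.span_le.mpr ?_
  rintro _ ⟨x, y, b, hb, rfl⟩
  rw [SetLike.mem_coe, LinearMap.mem_ker, LinearMap.comp_apply, galoisMap_mul_tmul_sub_tmul_mul]
  exact rTensor_mkQ_mul_eq_zero hI _
    (rTensor_mkQ_mul_one_tmul_eq_zero I ((mem_coinv_iff I b).mp hb) y)

end Coinvariants

/-- For a left ideal coideal `I` and `B := H^{co H/I}`,
`B` is exactly the equalizer of the two canonical maps `H → H ⊗_B H`. -/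
theorem coinv_equalizerCond (k H : Type*) [Field k] [Ring H] [HopfAlgebra k H]
    (I : Submodule k H) (hI : IsLeftIdealCoideal k H I) :
    {h : H | h ⊗ₜ[k] (1 : H) - (1 : H) ⊗ₜ[k] h ∈
        JB k H ((coinv k H I : Submodule k H) : Set H)} =
      ((coinv k H I : Submodule k H) : Set H) := by
  ext h
  constructor
  · intro hJ
    have hker := JB_coinv_le_ker I hI.mul_mem_left hJ
    rwa [LinearMap.mem_ker, LinearMap.comp_apply, galoisMap_tmul_one_sub_one_tmul,
      ← mem_coinv_iff] at hker
  · intro hb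
    exact Submodule.subset_span ⟨1, 1, h, hb, by rw [one_mul, mul_one]⟩

end HopfGalois
end
end
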